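/- If real numbers x and y satisfy d(x,y) = 0 and N₁(x,y) = 0, then x = 0, x = 1, x = 3, or 3x⁴ − 20x³ + 7x² + 4x − 3 = 0. -/
import Mathlib


def d (x y : ℝ) : ℝ := x^2*y + 3*x^2 - x*y - 3*y^2 - 3*x - 3*y
def Q1 (x y : ℝ) : ℝ :=
  -4*x^4 - 12*x^3*y + x^2*y^2 + 9*x*y^3 + 8*x^3 + 42*x^2*y + 10*x*y^2
    - 27*y^3 + 17*x^2 - 15*x*y - 38*y^2 - 12*x - 15*y
def N1 (x y : ℝ) : ℝ := (-2*x + y + 3) * (x - 1) * Q1 x y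

theorem zeros_of_N1 (x y : ℝ) (hd : d x y = 0) (hN : N1 x y = 0) :
    x = 0 ∨ x = 1 ∨ x = 3 ∨ 3*x^4 - 20*x^3 + 7*x^2 + 4*x - 3 = 0 := by
  simp only [d, Q1, N1] at hd hN
  have key : 24*x*(x-1)^7*(x-3)^4*(3*x^4 - 20*x^3 + 7*x^2 + 4*x - 3) = 0 := by
    linear_combination ((-9720) + (56376)*x^1 + (-97308)*x^2 + (-41877)*x^3 + (411321)*x^4 + (-789657)*x^5 + (979842)*x^6 + (-932982)*x^7 + (673896)*x^8 + (-346731)*x^9 + (120081)*x^10 + (-26367)*x^11 + (3306)*x^12 + (-180)*x^13 + (-27864)*y^1 + (147231)*x^1*y^1 + (-219564)*x^2*y^1 + (-131988)*x^3*y^1 + (848085)*x^4*y^1 + (-1299000)*x^5*y^1 + (1160880)*x^6*y^1 + (-711831)*x^7*y^1 + (314070)*x^8*y^1 + (-97842)*x^9*y^1 + (20103)*x^10*y^1 + (-2406)*x^11*y^1 + (126)*x^12*y^1 + (-25704)*y^2 + (133524)*x^1*y^2 + (-222708)*x^2*y^2 + (112965)*x^3*y^2 + (26313)*x^4*y^2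 + (45159)*x^5*y^2 + (-172416)*x^6*y^2 + (160998)*x^7*y^2 + (-75000)*x^8*y^2 + (19383)*x^9*y^2 + (-2667)*x^10*y^2 + (153)*x^11*y^2 + (-5832)*y^3 + (27945)*x^1*y^3 + (-42120)*x^2*y^3 + (30348)*x^3*y^3 + (-38475)*x^4*y^3 + (67878)*x^5*y^3 + (-64746)*x^6*y^3 + (32967)*x^7*y^3 + (-9234)*x^8*y^3 + (1350)*x^9*y^3 + (-81)*x^10*y^3) * hd + ((-648) + (1944)*x^1 + (1161)*x^2 + (-9519)*x^3 + (13491)*x^4 + (-10188)*x^5 + (5538)*x^6 + (-2376)*x^7 + (711)*x^8 + (-123)*x^9 + (9)*x^10 + (-648)*y^1 + (2241)*x^1*y^1 + (-1476)*x^2*y^1 + (657)*x^3*y^1 + (-2907)*x^4*y^1 + (3447)*x^5*y^1 + (-1629)*x^6*y^1 + (342)*x^7*y^1 + (-27)*x^8*y^1) * hN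
  rcases mul_eq_zero.1 key with h | h
  · rcases mul_eq_zero.1 h with h | h
    · rcases mul_eq_zero.1 h with h | h
      · rcases mul_eq_zero.1 h with h | h
        · norm_num at h
        · exact Or.inl h
      · have := pow_eq_zero_iff (n := 7) (by norm_num) |>.1 h
        exact Or.inr (Or.inl (by linarith [sub_eq_zero.1 this]))
    · have := pow_eq_zero_iff (n := 4) (by norm_num) |>.1 h
      exact Or.inr (Or.inr (Or.inl (by linarith [sub_eq_zero.1 this])))
  · exact Or.inr (Or.inr (Or.inr h))
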